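/- (Approximation by constants.) Let 0 < p ≤ ∞. Then there is a constant C depending only on d and p such that for every d-parallelepiped Q and every f ∈ L_p(Q), there exists a constant β ∈ ℝ such that ‖f − β‖_{p,Q} ≤ C · Ω_𝟏(f, δ(Q))_{p,Q}, where 𝟏 = (1,…,1) ∈ ℕ^d and δ(Q) is the size of Q. -/

import Mathlib

open MeasureTheory ENNReal NNReal Finset

/-- The mixed `r`-th difference operator `Δ_h^r` applied to `f` at `x`. -/
noncomputable def mixedDiff {d : ℕ} (r : Fin d → ℕ) (h : Fin d → ℝ)
    (f : (Fin d → ℝ) → ℝ) (x : Fin d → ℝ) : ℝ :=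
  ∑ j : (i : Fin d) → Fin (r i + 1),
    (∏ i, (-1 : ℝ) ^ (r i - (j i : ℕ)) * ((r i).choose (j i) : ℝ)) *
      f (fun i => x i + (j i : ℝ) * h i)

/-- The `d`-parallelepiped `Q = ∏ [a_i, b_i]`. -/
def box {d : ℕ} (a b : Fin d → ℝ) : Set (Fin d → ℝ) :=
  Set.univ.pi fun i => Set.Icc (a i) (b i)

/-- `Q_y = {x ∈ Q : x_i, x_i + y_i ∈ [a_i,b_i] ∀ i}`. -/
def boxShift {d : ℕ} (a b : Fin d → ℝ) (y : Fin d → ℝ) : Set (Fin d → ℝ) :=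
  {x | ∀ i, x i ∈ Set.Icc (a i) (b i) ∧ x i + y i ∈ Set.Icc (a i) (b i)}

/-- The `L_p` quasi-norm of `f` on a set `S` (essential supremum for `p = ∞`). -/
noncomputable def pNorm {d : ℕ} (p : ℝ≥0∞) (f : (Fin d → ℝ) → ℝ)
    (S : Set (Fin d → ℝ)) : ℝ≥0∞ :=
  eLpNorm f p (volume.restrict S)

/-- The mixed `r`-th modulus of smoothness `ω_r(f,t)_{p,Q}`. -/
noncomputable def modulus {d : ℕ} (p : ℝ≥0∞) (r : Fin d → ℕ) (f : (Fin d → ℝ) → ℝ)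
    (a b : Fin d → ℝ) (t : Fin d → ℝ) : ℝ≥0∞ :=
  ⨆ h ∈ {h : Fin d → ℝ | ∀ i, |h i| ≤ t i},
    pNorm p (mixedDiff r h f) (boxShift a b fun i => (r i : ℝ) * h i)

/-- `r(e)` : the vector with coordinates `r_i` on `e` and `0` off `e`. -/
def restrictOrder {d : ℕ} (r : Fin d → ℕ) (e : Finset (Fin d)) : Fin d → ℕ :=
  fun i => if i ∈ e then r i else 0

/-- The total mixed modulus of smoothness `Ω_r(f,t)_{p,Q}`. -/
noncomputable def totalModulus {d : ℕ} (p : ℝ≥0∞) (r : Fin d → ℕ) (f : (Fin d → ℝ) → ℝ)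
    (a b : Fin d → ℝ) (t : Fin d → ℝ) : ℝ≥0∞ :=
  ∑ e ∈ Finset.univ.powerset.erase ∅, modulus p (restrictOrder r e) f a b t

/-- `φ ∈ 𝒫_r` : `φ` is a polynomial of degree at most `r_i - 1` in the variable `x_i`. -/
def IsPolyDeg {d : ℕ} (r : Fin d → ℕ) (φ : (Fin d → ℝ) → ℝ) : Prop :=
  ∃ P : MvPolynomial (Fin d) ℝ, (∀ i, P.degreeOf i < r i) ∧ ∀ x, φ x = MvPolynomial.eval x P

/-- The error `E_r(f)_{p,Q}` of best approximation by polynomials from `𝒫_r`. -/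
noncomputable def bestApprox {d : ℕ} (p : ℝ≥0∞) (r : Fin d → ℕ) (f : (Fin d → ℝ) → ℝ)
    (a b : Fin d → ℝ) : ℝ≥0∞ :=
  ⨅ φ ∈ {φ : (Fin d → ℝ) → ℝ | IsPolyDeg r φ}, pNorm p (fun x => f x - φ x) (box a b)

/-!
Only the first-order moduli `ω_i` in the coordinate directions are needed. For `x, y ∈ Q`,
telescope `g y - g x` along the path that replaces the coordinates of `x` by those of `y` one at
a time, so that the `i`-th step is a first difference in direction `i`. Exchanging the
coordinates `k < i` of `x` and `y` preserves the product measure on `Q × Q`, and the substitution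
`h = y_i - x_i` then bounds the integral of the `q`-th power of the `i`-th step by
`2 |Q| ω_i ^ q`. Hence `∫∫ |g y - g x| ^ q ≤ 2 d ^ (q + 1) |Q| Ω ^ q`, and a point `x` doing at
most as badly as the average gives `β = g x`. For `p = ∞` the same computation, applied to the
indicator of `{|Δ_i| > ω_i}`, shows that `|g y - g x| ≤ ∑ ω_i` for almost every `(x, y)`.
-/

open Function

theorem ENNReal.rpow_sum_le_card_rpow_mul_sum {ι : Type*} (s : Finset ι) (f : ι → ℝ≥0∞)
    {q : ℝ} (hq : 0 < q) : (∑ i ∈ s, f i) ^ q ≤ (s.card : ℝ≥0∞) ^ q * ∑ i ∈ s, f i ^ q := by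
  rcases s.eq_empty_or_nonempty with rfl | hs
  · simp [ENNReal.zero_rpow_of_pos hq]
  obtain ⟨j, hj, hmax⟩ := s.exists_max_image f hs
  calc (∑ i ∈ s, f i) ^ q ≤ (s.card * f j) ^ q :=
        ENNReal.rpow_le_rpow (by simpa using Finset.sum_le_card_nsmul s f (f j) hmax) hq.le
    _ = (s.card : ℝ≥0∞) ^ q * f j ^ q := ENNReal.mul_rpow_of_nonneg _ _ hq.le
    _ ≤ (s.card : ℝ≥0∞) ^ q * ∑ i ∈ s, f i ^ q := by
        gcongr
        exact Finset.single_le_sum (f := fun i => f i ^ q) (fun _ _ => zero_le) hj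

@[fun_prop]
theorem Measurable.set_piecewise {X ι α : Type*} [MeasurableSpace X] [MeasurableSpace α]
    (s : Set ι) [DecidablePred (· ∈ s)] {f g : X → ι → α} (hf : Measurable f)
    (hg : Measurable g) : Measurable fun x => s.piecewise (f x) (g x) := by
  refine measurable_pi_lambda _ fun k => ?_
  by_cases hk : k ∈ s
  · simp only [Set.piecewise, hk, if_true]
    exact (measurable_pi_apply k).comp hf
  · simp only [Set.piecewise, hk, if_false]
    exact (measurable_pi_apply k).comp hg

theorem MeasureTheory.measurePreserving_piecewise_swap {ι α : Type*} [Fintype ι]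
    [MeasurableSpace α] (ν : ι → Measure α) [∀ i, SigmaFinite (ν i)] (s : Set ι)
    [DecidablePred (· ∈ s)] :
    MeasurePreserving (fun p : (ι → α) × (ι → α) => (s.piecewise p.2 p.1, s.piecewise p.1 p.2))
      ((Measure.pi ν).prod (Measure.pi ν)) ((Measure.pi ν).prod (Measure.pi ν)) := by
  have he := measurePreserving_arrowProdEquivProdArrow α α ι ν ν
  have hswap : MeasurePreserving (fun w : ι → α × α => fun k => if k ∈ s then (w k).swap else w k)
      (Measure.pi fun k => (ν k).prod (ν k)) (Measure.pi fun k => (ν k).prod (ν k)) :=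
    measurePreserving_pi (fun k => (ν k).prod (ν k)) (fun k => (ν k).prod (ν k))
      (f := fun k (w : α × α) => if k ∈ s then w.swap else w) fun k => by
        by_cases hk : k ∈ s
        · simpa [hk] using Measure.measurePreserving_swap
        · simp only [hk, if_false]
          exact MeasurePreserving.id _
  convert he.comp (hswap.comp he.symm) using 1
  funext p
  ext k <;> by_cases hk : k ∈ s <;> simp [hk, MeasurableEquiv.arrowProdEquivProdArrow,
    Equiv.arrowProdEquivProdArrow, Set.piecewise]

theorem MeasureTheory.lintegral_pi_comp_eval {ι α : Type*} [Fintype ι] [DecidableEq ι]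
    [MeasurableSpace α] (ν : ι → Measure α) [∀ i, SigmaFinite (ν i)] (i : ι) {F : α → ℝ≥0∞}
    (hF : Measurable F) :
    ∫⁻ x, F (x i) ∂Measure.pi ν = (∏ j ∈ Finset.univ.erase i, ν j Set.univ) * ∫⁻ t, F t ∂ν i := by
  rw [← lintegral_map hF (measurable_pi_apply i), Measure.pi_map_eval, lintegral_smul_measure,
    smul_eq_mul]

theorem MeasureTheory.lintegral_prod_piecewise_eval {ι α : Type*} [Fintype ι] [DecidableEq ι]
    [MeasurableSpace α] (ν : ι → Measure α) [∀ i, SigmaFinite (ν i)] (s : Set ι)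
    [DecidablePred (· ∈ s)] {i : ι} (hi : i ∉ s) {H : (ι → α) → α → ℝ≥0∞}
    (hH : Measurable (uncurry H)) :
    ∫⁻ p, H (s.piecewise p.2 p.1) (p.2 i) ∂(Measure.pi ν).prod (Measure.pi ν)
      = (∏ j ∈ Finset.univ.erase i, ν j Set.univ) * ∫⁻ z, ∫⁻ t, H z t ∂ν i ∂Measure.pi ν := by
  have hH' : Measurable fun q : (ι → α) × (ι → α) => H q.1 (q.2 i) :=
    hH.comp (measurable_fst.prodMk ((measurable_pi_apply i).comp measurable_snd))
  have hswap := (measurePreserving_piecewise_swap ν s).lintegral_comp hH'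
  simp only [Set.piecewise_eq_of_notMem _ _ _ hi] at hswap
  rw [hswap, lintegral_prod _ hH'.aemeasurable, ← lintegral_const_mul _
    hH.lintegral_prod_right]
  exact lintegral_congr fun z =>
    lintegral_pi_comp_eval ν i (hH.comp (measurable_const.prodMk measurable_id))

theorem MeasureTheory.exists_lintegral_le_of_lintegral_prod_le {α β : Type*} [MeasurableSpace α]
    [MeasurableSpace β] {μ : Measure α} [IsFiniteMeasure μ] (hμ : μ ≠ 0) {ν : Measure β}
    [SFinite ν] {F : α × β → ℝ≥0∞} (hF : Measurable F) {K : ℝ≥0∞}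
    (hFK : ∫⁻ p, F p ∂μ.prod ν ≤ μ Set.univ * K) : ∃ x, ∫⁻ y, F (x, y) ∂ν ≤ K := by
  obtain ⟨x, hx⟩ := exists_le_laverage hμ (hF.lintegral_prod_right' (ν := ν)).aemeasurable
  refine ⟨x, hx.trans ?_⟩
  rw [laverage_eq, ← lintegral_prod _ hF.aemeasurable]
  exact ENNReal.div_le_of_le_mul' hFK

theorem MeasureTheory.ae_eq_restrict_comp_add_right {G β : Type*} [MeasurableSpace G] [AddGroup G]
    [MeasurableAdd G] (μ : Measure G) [μ.IsAddRightInvariant] {S T : Set G}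
    (hS : MeasurableSet S) (v : G) (hTS : ∀ z ∈ T, z + v ∈ S) {f g : G → β}
    (hfg : f =ᵐ[μ.restrict S] g) : (fun z => f (z + v)) =ᵐ[μ.restrict T] fun z => g (z + v) :=
  ae_restrict_of_ae_restrict_of_subset hTS
    (((measurePreserving_add_right μ v).restrict_preimage hS).quasiMeasurePreserving.ae_eq hfg)

theorem update_add_eq_add_single {ι M : Type*} [DecidableEq ι] [AddZeroClass M] (z : ι → M)
    (i : ι) (c : M) : update z i (z i + c) = z + Pi.single i c := by
  funext k
  rcases eq_or_ne k i with rfl | hk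
  · simp
  · simp [hk]

section Box

variable {d : ℕ}

def splice {α : Type*} (n : ℕ) (x y : Fin d → α) : Fin d → α :=
  {k : Fin d | (k : ℕ) < n}.piecewise y x

theorem update_splice {α : Type*} (i : Fin d) (x y : Fin d → α) :
    update (splice i x y) i (y i) = splice (i + 1) x y := by
  funext k
  rcases eq_or_ne k i with rfl | hk
  · simp [splice]
  · have : (k : ℕ) ≠ i := Fin.val_ne_of_ne hk
    simp only [splice, update_of_ne hk, Set.piecewise, Set.mem_ofPred_eq]
    split_ifs <;> first | rfl | omega

theorem sub_eq_sum_update_splice_sub {α G : Type*} [AddCommGroup G] (g : (Fin d → α) → G)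
    (x y : Fin d → α) :
    g y - g x = ∑ i : Fin d, (g (update (splice i x y) i (y i)) - g (splice i x y)) := by
  have h0 : splice 0 x y = x := by ext k; simp [splice, Set.piecewise]
  have hd : splice d x y = y := by ext k; simp [splice, Set.piecewise]
  simp_rw [update_splice]
  rw [Fin.sum_univ_eq_sum_range (fun n => g (splice (n + 1) x y) - g (splice n x y)),
    Finset.sum_range_sub (fun n => g (splice n x y)), h0, hd]

theorem enorm_sub_le_sum_enorm_update_splice_sub {α E : Type*} [NormedAddCommGroup E]
    (g : (Fin d → α) → E) (x y : Fin d → α) :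
    ‖g y - g x‖ₑ ≤ ∑ i : Fin d, ‖g (update (splice i x y) i (y i)) - g (splice i x y)‖ₑ := by
  rw [sub_eq_sum_update_splice_sub g x y]
  exact enorm_sum_le _ _

theorem box_eq_Icc (a b : Fin d → ℝ) : _root_.box a b = Set.Icc a b := Set.pi_univ_Icc a b

theorem measurableSet_box (a b : Fin d → ℝ) : MeasurableSet (box a b) := by
  rw [box_eq_Icc]
  exact measurableSet_Icc

theorem restrict_box_eq_pi (a b : Fin d → ℝ) :
    volume.restrict (box a b) = Measure.pi fun k => volume.restrict (Set.Icc (a k) (b k)) := by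
  rw [_root_.box, volume_pi, Measure.restrict_pi_pi]

theorem boxShift_single (a b : Fin d → ℝ) (i : Fin d) (h : ℝ) :
    boxShift a b (Pi.single i h) = box a b ∩ {z | z i + h ∈ Set.Icc (a i) (b i)} := by
  ext z
  simp only [boxShift, _root_.box, Set.mem_inter_iff, Set.mem_pi, Set.mem_univ, true_implies]
  constructor
  · intro hz
    exact ⟨fun k => (hz k).1, by simpa using (hz i).2⟩
  · rintro ⟨hz, hzi⟩ k
    refine ⟨hz k, ?_⟩
    rcases eq_or_ne k i with rfl | hk
    · simpa using hzi
    · simpa [hk] using hz k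

theorem lintegral_box_lintegral_Icc_le (a b : Fin d → ℝ) (i : Fin d)
    {H : (Fin d → ℝ) → ℝ → ℝ≥0∞} (hH : Measurable (uncurry H)) (M : ℝ≥0∞)
    (hM : ∀ h : ℝ, |h| ≤ b i - a i →
      ∫⁻ z in boxShift a b (Pi.single i h), H z (z i + h) ≤ M) :
    ∫⁻ z in box a b, ∫⁻ t in Set.Icc (a i) (b i), H z t
      ≤ ENNReal.ofReal (2 * (b i - a i)) * M := by
  set I := Set.Icc (a i) (b i)
  have hshift : Measurable (uncurry fun z h => I.indicator (H z) (z i + h)) :=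
    (hH.indicator (measurableSet_Icc.preimage measurable_snd)).comp
      (f := fun q : (Fin d → ℝ) × ℝ => (q.1, q.1 i + q.2)) (by fun_prop)
  calc ∫⁻ z in box a b, ∫⁻ t in I, H z t
      = ∫⁻ z in box a b, ∫⁻ h, I.indicator (H z) (z i + h) := by
        refine lintegral_congr fun z => ?_
        rw [← lintegral_indicator measurableSet_Icc, lintegral_add_left_eq_self]
    _ = ∫⁻ h, ∫⁻ z in box a b, I.indicator (H z) (z i + h) :=
        lintegral_lintegral_swap hshift.aemeasurable
    _ = ∫⁻ h, ∫⁻ z in boxShift a b (Pi.single i h), H z (z i + h) := by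
        refine lintegral_congr fun h => ?_
        have hS : MeasurableSet {z : Fin d → ℝ | z i + h ∈ I} :=
          measurableSet_Icc.preimage (by fun_prop)
        rw [boxShift_single, Set.inter_comm, ← Measure.restrict_restrict hS,
          ← lintegral_indicator hS]
        rfl
    _ ≤ ∫⁻ h, (Set.Icc (-(b i - a i)) (b i - a i)).indicator (fun _ => M) h := by
        refine lintegral_mono fun h => ?_
        by_cases hh : |h| ≤ b i - a i
        · rw [Set.indicator_of_mem (Set.mem_Icc.mpr (abs_le.mp hh))]
          exact hM h hh
        · have hempty : boxShift a b (Pi.single i h) = ∅ := by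
            refine Set.eq_empty_of_forall_notMem fun z hz => hh ?_
            rw [boxShift_single] at hz
            obtain ⟨⟨hz1, hz2⟩, hz3, hz4⟩ := hz.1 i (Set.mem_univ i), hz.2
            exact abs_le.mpr ⟨by linarith, by linarith⟩
          simp [hempty]
    _ = ENNReal.ofReal (2 * (b i - a i)) * M := by
        rw [lintegral_indicator_const measurableSet_Icc, Real.volume_Icc, mul_comm]
        ring_nf

theorem lintegral_prod_piecewise_le (a b : Fin d → ℝ) (i : Fin d) (s : Set (Fin d))
    [DecidablePred (· ∈ s)] (hi : i ∉ s) {H : (Fin d → ℝ) → ℝ → ℝ≥0∞}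
    (hH : Measurable (uncurry H)) (M : ℝ≥0∞)
    (hM : ∀ h : ℝ, |h| ≤ b i - a i →
      ∫⁻ z in boxShift a b (Pi.single i h), H z (z i + h) ≤ M) :
    ∫⁻ p, H (s.piecewise p.2 p.1) (p.2 i)
        ∂(volume.restrict (box a b)).prod (volume.restrict (box a b))
      ≤ 2 * volume (box a b) * M := by
  rw [restrict_box_eq_pi, lintegral_prod_piecewise_eval _ s hi hH, ← restrict_box_eq_pi]
  calc _ ≤ (∏ j ∈ Finset.univ.erase i, volume.restrict (Set.Icc (a j) (b j)) Set.univ) *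
          (ENNReal.ofReal (2 * (b i - a i)) * M) := by
        gcongr
        exact lintegral_box_lintegral_Icc_le a b i hH M hM
    _ = 2 * volume (box a b) * M := by
        rw [box_eq_Icc, Real.volume_Icc_pi, ← Finset.prod_erase_mul _ _ (Finset.mem_univ i),
          ENNReal.ofReal_mul zero_le_two]
        simp only [Measure.restrict_apply_univ, Real.volume_Icc, ENNReal.ofReal_ofNat]
        ring

theorem restrictOrder_single_self (i : Fin d) : restrictOrder (fun _ => 1) {i} i = 1 := by
  simp [restrictOrder]

theorem restrictOrder_single_of_ne {i k : Fin d} (hk : k ≠ i) :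
    restrictOrder (fun _ => 1) {i} k = 0 := by
  simp [restrictOrder, hk]

theorem restrictOrder_single_mul (i : Fin d) (h : Fin d → ℝ) :
    (fun k => (restrictOrder (fun _ => 1) {i} k : ℝ) * h k) = Pi.single i (h i) := by
  funext k
  rcases eq_or_ne k i with rfl | hk
  · simp [restrictOrder_single_self]
  · simp [restrictOrder_single_of_ne hk, hk]

theorem prod_comp_restrictOrder_single {M : Type*} [CommMonoid M] (i : Fin d) (c : ℕ → M) :
    ∏ k, c (restrictOrder (fun _ => 1) {i} k) = c 1 * ∏ _k ∈ Finset.univ.erase i, c 0 := by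
  rw [← Finset.mul_prod_erase _ _ (Finset.mem_univ i), restrictOrder_single_self]
  congr 1
  exact Finset.prod_congr rfl fun k hk =>
    by rw [restrictOrder_single_of_ne (Finset.ne_of_mem_erase hk)]

theorem eq_last_or_eq_zero_of_restrictOrder_single {i : Fin d}
    (j : (k : Fin d) → Fin (restrictOrder (fun _ => 1) {i} k + 1)) :
    j = (fun k => Fin.last (restrictOrder (fun _ => 1) {i} k)) ∨ j = 0 := by
  have hri := restrictOrder_single_self i
  have hji := (j i).isLt
  have hjk : ∀ k, k ≠ i → (j k : ℕ) = 0 := fun k hk => by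
    have := (j k).isLt
    have := restrictOrder_single_of_ne hk
    omega
  by_cases h0 : (j i : ℕ) = 0
  · refine Or.inr (funext fun k => Fin.ext ?_)
    rcases eq_or_ne k i with rfl | hk
    · exact h0
    · exact hjk k hk
  · refine Or.inl (funext fun k => Fin.ext ?_)
    rcases eq_or_ne k i with rfl | hk
    · simp only [Fin.val_last]
      omega
    · simp only [Fin.val_last, restrictOrder_single_of_ne hk, hjk k hk]

theorem mixedDiff_restrictOrder_single (i : Fin d) (h : Fin d → ℝ) (g : (Fin d → ℝ) → ℝ) :
    mixedDiff (restrictOrder (fun _ => 1) {i}) h g = fun z => g (update z i (z i + h i)) - g z := by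
  funext z
  rw [mixedDiff, Fintype.sum_eq_add (fun k => Fin.last (restrictOrder (fun _ => 1) {i} k)) 0
    (fun heq => by simpa [restrictOrder_single_self] using congrArg (fun j => (j i : ℕ)) heq)
    (fun j hj => absurd (eq_last_or_eq_zero_of_restrictOrder_single j) (by tauto))]
  have hupdate : (fun k => z k + (restrictOrder (fun _ => 1) {i} k : ℝ) * h k)
      = update z i (z i + h i) := by
    rw [update_add_eq_add_single, ← restrictOrder_single_mul]
    rfl
  simp only [Fin.val_last, Nat.sub_self, pow_zero, Nat.choose_self, Nat.cast_one, mul_one,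
    Finset.prod_const_one, one_mul, hupdate, Pi.zero_apply, Fin.val_zero, Nat.sub_zero,
    Nat.choose_zero_right, Nat.cast_zero, zero_mul, add_zero,
    prod_comp_restrictOrder_single i fun n => (-1 : ℝ) ^ n]
  ring

/-- The modulus `ω_{𝟏({i})}(f, δ(Q))_{p,Q}` of first differences in the direction `i`. -/
noncomputable def coordModulus (p : ℝ≥0∞) (f : (Fin d → ℝ) → ℝ) (a b : Fin d → ℝ) (i : Fin d) :
    ℝ≥0∞ :=
  modulus p (restrictOrder (fun _ => 1) {i}) f a b fun k => b k - a k

theorem coordModulus_congr_ae (p : ℝ≥0∞) {f g : (Fin d → ℝ) → ℝ} {a b : Fin d → ℝ}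
    (hfg : f =ᵐ[volume.restrict (box a b)] g) (i : Fin d) :
    coordModulus p f a b i = coordModulus p g a b i := by
  refine iSup_congr fun h => iSup_congr fun _ => eLpNorm_congr_ae ?_
  have hsub : boxShift a b (Pi.single i (h i)) ⊆ box a b := fun z hz k _ => (hz k).1
  have hshift : ∀ z ∈ boxShift a b (Pi.single i (h i)), z + Pi.single i (h i) ∈ box a b :=
    fun z hz k _ => (hz k).2
  simp_rw [restrictOrder_single_mul, mixedDiff_restrictOrder_single, update_add_eq_add_single]
  exact (ae_eq_restrict_comp_add_right volume (measurableSet_box a b) _ hshift hfg).sub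
    (ae_restrict_of_ae_restrict_of_subset hsub hfg)

theorem pNorm_update_sub_le_coordModulus (p : ℝ≥0∞) (g : (Fin d → ℝ) → ℝ) {a b : Fin d → ℝ}
    (hab : ∀ k, a k ≤ b k) (i : Fin d) {h : ℝ} (hh : |h| ≤ b i - a i) :
    pNorm p (fun z => g (update z i (z i + h)) - g z) (boxShift a b (Pi.single i h))
      ≤ coordModulus p g a b i := by
  have hadm : ∀ k, |(Pi.single i h : Fin d → ℝ) k| ≤ b k - a k := by
    intro k
    rcases eq_or_ne k i with rfl | hk
    · simpa using hh
    · simpa [hk] using hab k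
  have : _ ≤ coordModulus p g a b i :=
    le_iSup₂ (f := fun (h' : Fin d → ℝ) (_ : ∀ k, |h' k| ≤ b k - a k) =>
      pNorm p (mixedDiff (restrictOrder (fun _ => 1) {i}) h' g)
        (boxShift a b fun k => (restrictOrder (fun _ => 1) {i} k : ℝ) * h' k)) _ hadm
  simpa only [restrictOrder_single_mul, mixedDiff_restrictOrder_single, Pi.single_eq_same]
    using this

theorem sum_coordModulus_le_totalModulus (p : ℝ≥0∞) (f : (Fin d → ℝ) → ℝ) (a b : Fin d → ℝ) :
    ∑ i, coordModulus p f a b i ≤ totalModulus p (fun _ => 1) f a b fun k => b k - a k := by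
  rw [totalModulus]
  unfold coordModulus
  rw [← Finset.sum_image (g := fun i : Fin d => ({i} : Finset (Fin d)))
    (f := fun e => modulus p (restrictOrder (fun _ => 1) e) f a b fun k => b k - a k)
    fun i _ j _ hij => Finset.singleton_injective hij]
  refine Finset.sum_le_sum_of_subset fun e he => ?_
  obtain ⟨i, -, rfl⟩ := Finset.mem_image.mp he
  simp

theorem lintegral_prod_rpow_enorm_update_splice_sub_le {p : ℝ≥0∞} (hp0 : p ≠ 0) (hp : p ≠ ∞)
    {a b : Fin d → ℝ} (hab : ∀ k, a k ≤ b k) {g : (Fin d → ℝ) → ℝ} (hg : Measurable g)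
    (i : Fin d) :
    ∫⁻ w, ‖g (update (splice i w.1 w.2) i (w.2 i)) - g (splice i w.1 w.2)‖ₑ ^ p.toReal
        ∂(volume.restrict (box a b)).prod (volume.restrict (box a b))
      ≤ 2 * volume (box a b) * coordModulus p g a b i ^ p.toReal := by
  refine lintegral_prod_piecewise_le a b i {k : Fin d | (k : ℕ) < i} (by simp)
    (H := fun z t => ‖g (update z i t) - g z‖ₑ ^ p.toReal) (by fun_prop) _ fun h hh => ?_
  rw [lintegral_rpow_enorm_eq_rpow_eLpNorm' (ENNReal.toReal_pos hp0 hp),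
    ← eLpNorm_eq_eLpNorm' hp0 hp]
  gcongr
  exact pNorm_update_sub_le_coordModulus p g hab i hh

theorem ae_enorm_update_splice_sub_le_coordModulus_top {a b : Fin d → ℝ} (hab : ∀ k, a k ≤ b k)
    {g : (Fin d → ℝ) → ℝ} (hg : Measurable g) (i : Fin d) :
    ∀ᵐ w ∂(volume.restrict (box a b)).prod (volume.restrict (box a b)),
      ‖g (update (splice i w.1 w.2) i (w.2 i)) - g (splice i w.1 w.2)‖ₑ
        ≤ coordModulus ∞ g a b i := by
  set ω := coordModulus ∞ g a b i
  have hH : Measurable (uncurry fun z t =>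
      if ω < ‖g (update z i t) - g z‖ₑ then (1 : ℝ≥0∞) else 0) :=
    Measurable.ite (measurableSet_lt measurable_const (by fun_prop)) measurable_const
      measurable_const
  have hbad := lintegral_prod_piecewise_le a b i {k : Fin d | (k : ℕ) < i} (by simp) hH 0
    fun h hh => by
      have hle := pNorm_update_sub_le_coordModulus ∞ g hab i hh
      rw [pNorm, eLpNorm_exponent_top] at hle
      refine (lintegral_mono_ae ?_).trans_eq (lintegral_zero (μ := volume.restrict _))
      filter_upwards [ae_le_eLpNormEssSup (f := fun z => g (update z i (z i + h)) - g z)]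
        with z hz
      simpa using hz.trans hle
  rw [mul_zero, nonpos_iff_eq_zero, lintegral_eq_zero_iff
    (Measurable.ite (measurableSet_lt measurable_const (by fun_prop)) measurable_const
      measurable_const)] at hbad
  filter_upwards [hbad] with w hw
  simpa [splice] using hw

theorem exists_pNorm_sub_const_le_of_ne_top {p : ℝ≥0∞} (hp0 : p ≠ 0) (hp : p ≠ ∞)
    {a b : Fin d → ℝ} (hab : ∀ k, a k ≤ b k) {g : (Fin d → ℝ) → ℝ} (hg : Measurable g) :
    ∃ c : ℝ, pNorm p (fun x => g x - c) (box a b)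
      ≤ (2 * d : ℝ≥0∞) ^ (1 / p.toReal) * d * ∑ i, coordModulus p g a b i := by
  set q := p.toReal
  have hq : 0 < q := ENNReal.toReal_pos hp0 hp
  set μ := volume.restrict (box a b)
  set S := ∑ i, coordModulus p g a b i
  have : IsFiniteMeasure μ :=
    isFiniteMeasure_restrict.mpr (by rw [box_eq_Icc]; exact measure_Icc_lt_top.ne)
  rcases eq_or_ne μ 0 with hμ | hμ
  · exact ⟨0, by simp [pNorm, μ, hμ]⟩
  set Δ : Fin d → (Fin d → ℝ) × (Fin d → ℝ) → ℝ≥0∞ :=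
    fun i w => ‖g (update (splice i w.1 w.2) i (w.2 i)) - g (splice i w.1 w.2)‖ₑ
  have hΔ : ∀ i, Measurable fun w => Δ i w ^ q := fun i => by simp only [Δ, splice]; fun_prop
  have hsum : ∫⁻ w, ‖g w.2 - g w.1‖ₑ ^ q ∂μ.prod μ ≤ μ Set.univ * (2 * d * d ^ q * S ^ q) :=
    calc ∫⁻ w, ‖g w.2 - g w.1‖ₑ ^ q ∂μ.prod μ ≤ ∫⁻ w, (d : ℝ≥0∞) ^ q * ∑ i, Δ i w ^ q ∂μ.prod μ :=
          lintegral_mono fun w => (ENNReal.rpow_le_rpow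
            (enorm_sub_le_sum_enorm_update_splice_sub g w.1 w.2) hq.le).trans
              (by simpa using ENNReal.rpow_sum_le_card_rpow_mul_sum Finset.univ (Δ · w) hq)
      _ = (d : ℝ≥0∞) ^ q * ∑ i, ∫⁻ w, Δ i w ^ q ∂μ.prod μ := by
          rw [lintegral_const_mul _ (Finset.measurable_sum _ fun i _ => hΔ i),
            lintegral_finsetSum _ fun i _ => hΔ i]
      _ ≤ (d : ℝ≥0∞) ^ q * ∑ _i : Fin d, 2 * volume (box a b) * S ^ q := by
          gcongr with i
          exact (lintegral_prod_rpow_enorm_update_splice_sub_le hp0 hp hab hg i).trans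
            (by gcongr; exact Finset.single_le_sum (fun _ _ => zero_le) (Finset.mem_univ i))
      _ = μ Set.univ * (2 * d * d ^ q * S ^ q) := by
          simp only [Finset.sum_const, Finset.card_univ, Fintype.card_fin, nsmul_eq_mul, μ,
            Measure.restrict_apply_univ]
          ring
  obtain ⟨x, hx⟩ := exists_lintegral_le_of_lintegral_prod_le hμ (by fun_prop) hsum
  refine ⟨g x, ?_⟩
  calc pNorm p (fun y => g y - g x) (box a b) = (∫⁻ y, ‖g y - g x‖ₑ ^ q ∂μ) ^ (1 / q) := by
        rw [pNorm, eLpNorm_eq_lintegral_rpow_enorm_toReal hp0 hp]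
    _ ≤ (2 * d * d ^ q * S ^ q) ^ (1 / q) := by gcongr
    _ = (2 * d : ℝ≥0∞) ^ (1 / q) * d * S := by
        rw [ENNReal.mul_rpow_of_nonneg _ _ (by positivity),
          ENNReal.mul_rpow_of_nonneg _ _ (by positivity), one_div, ENNReal.rpow_rpow_inv hq.ne',
          ENNReal.rpow_rpow_inv hq.ne']

theorem exists_pNorm_top_sub_const_le {a b : Fin d → ℝ} (hab : ∀ k, a k ≤ b k)
    {g : (Fin d → ℝ) → ℝ} (hg : Measurable g) :
    ∃ c : ℝ, pNorm ∞ (fun x => g x - c) (box a b) ≤ ∑ i, coordModulus ∞ g a b i := by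
  set μ := volume.restrict (box a b)
  rcases eq_or_ne μ 0 with hμ | hμ
  · exact ⟨0, by simp [pNorm, μ, hμ]⟩
  have hall : ∀ᵐ w ∂μ.prod μ, ‖g w.2 - g w.1‖ₑ ≤ ∑ i, coordModulus ∞ g a b i := by
    filter_upwards [ae_all_iff.mpr (ae_enorm_update_splice_sub_le_coordModulus_top hab hg)]
      with w hw
    exact (enorm_sub_le_sum_enorm_update_splice_sub g w.1 w.2).trans
      (Finset.sum_le_sum fun i _ => hw i)
  have : (ae μ).NeBot := ae_neBot.mpr hμ
  obtain ⟨x, hx⟩ := (Measure.ae_ae_of_ae_prod hall).exists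
  exact ⟨g x, by rw [pNorm, eLpNorm_exponent_top]; exact eLpNormEssSup_le_of_ae_enorm_bound hx⟩

end Box

/-- **Approximation by constants.** For `0 < p ≤ ∞` there is a constant `C = C(d,p)` such
that for every `d`-parallelepiped `Q` and every `f ∈ L_p(Q)` there exists `β ∈ ℝ` with
`‖f − β‖_{p,Q} ≤ C · Ω_𝟏(f, δ(Q))_{p,Q}`, where `𝟏 = (1,…,1)`. -/
theorem approx_by_constants (d : ℕ) (p : ℝ≥0∞) (hp : 0 < p) :
    ∃ C : ℝ≥0, 0 < C ∧
      ∀ a b : Fin d → ℝ, (∀ i, a i ≤ b i) →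
        ∀ f : (Fin d → ℝ) → ℝ, MemLp f p (volume.restrict (box a b)) →
          ∃ β : ℝ,
            pNorm p (fun x => f x - β) (box a b) ≤
              C * totalModulus p (fun _ => 1) f a b (fun i => b i - a i) := by
  set C : ℝ≥0 := 1 + (2 * d) ^ (1 / p.toReal) * d
  have hC : (C : ℝ≥0∞) = 1 + (2 * d : ℝ≥0∞) ^ (1 / p.toReal) * d := by
    rw [ENNReal.coe_add, ENNReal.coe_mul,
      ENNReal.coe_rpow_of_nonneg _ (one_div_nonneg.mpr ENNReal.toReal_nonneg)]
    norm_cast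
  refine ⟨C, by positivity, fun a b hab f hf => ?_⟩
  obtain ⟨g, hg, hfg⟩ : ∃ g, StronglyMeasurable g ∧ f =ᵐ[volume.restrict (box a b)] g :=
    ⟨_, hf.1.stronglyMeasurable_mk, hf.1.ae_eq_mk⟩
  obtain ⟨c, hc⟩ : ∃ c : ℝ, pNorm p (fun x => g x - c) (box a b)
      ≤ C * ∑ i, coordModulus p g a b i := by
    rcases eq_or_ne p ∞ with rfl | hp_top
    · obtain ⟨c, hc⟩ := exists_pNorm_top_sub_const_le hab hg.measurable
      exact ⟨c, hc.trans (le_mul_of_one_le_left' (by simp [hC]))⟩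
    · obtain ⟨c, hc⟩ := exists_pNorm_sub_const_le_of_ne_top hp.ne' hp_top hab hg.measurable
      exact ⟨c, hc.trans (by rw [hC]; gcongr; exact le_add_self)⟩
  refine ⟨c, ?_⟩
  calc pNorm p (fun x => f x - c) (box a b) = pNorm p (fun x => g x - c) (box a b) :=
        eLpNorm_congr_ae (hfg.sub .rfl)
    _ ≤ C * ∑ i, coordModulus p g a b i := hc
    _ ≤ C * totalModulus p (fun _ => 1) f a b (fun i => b i - a i) := by
        simp_rw [← coordModulus_congr_ae p hfg]
        gcongr
        exact sum_coordModulus_le_totalModulus p f a b
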